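/- arXiv:1805.09747 — 2 statements merged into one kernel-verified Lean document; each statement's English description precedes it below -/
import Mathlib

section
/- Let u_1, ..., u_n be unit vectors in ℝⁿ satisfying the ℓ₂² triangle inequality and the balance condition ∑_{i<j} ‖u_i - u_j‖² = n² (equivalently ∑_{i,j} u_iᵀu_j = 0). Then for any i, the number of j with ‖u_i - u_j‖² ≤ 1/8 is at most (14/15)n. -/
/-!
The ball `S` around `u i` has `ℓ₂²`-diameter at most `1/4` by the triangle inequality, and all
other pairs are at distance at most `4`. With `m = #S` the balance condition then forces
`2n² ≤ m²/4 + 4(n² - m²)`, i.e. `m² ≤ 8n²/15`, and `√(8/15) < 14/15`.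
-/

open Finset

theorem Finset.sum_sum_le_of_le_on_sq {ι : Type*} [Fintype ι] (d : ι → ι → ℝ) (S : Finset ι)
    {a b : ℝ} (hS : ∀ j ∈ S, ∀ k ∈ S, d j k ≤ a) (hb : ∀ j k, d j k ≤ b) :
    ∑ j, ∑ k, d j k ≤ a * #S ^ 2 + b * (Fintype.card ι ^ 2 - #S ^ 2) := by
  -- after subtracting `b`, the terms outside `S ×ˢ S` are nonpositive and can be dropped
  have hout : ∑ p ∈ univ ×ˢ univ, (d p.1 p.2 - b) ≤ ∑ p ∈ S ×ˢ S, (d p.1 p.2 - b) :=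
    sum_le_sum_of_subset_of_nonpos' (subset_univ _) fun p _ _ => sub_nonpos.2 (hb p.1 p.2)
  have hin : ∑ p ∈ S ×ˢ S, (d p.1 p.2 - b) ≤ #(S ×ˢ S) • (a - b) :=
    sum_le_card_nsmul _ _ _ fun p hp => by
      rw [mem_product] at hp
      exact sub_le_sub_right (hS _ hp.1 _ hp.2) b
  rw [sum_product' univ univ fun j k => d j k - b] at hout
  simp only [sum_sub_distrib, sum_const, card_univ, card_product, nsmul_eq_mul] at hout hin
  push_cast at hout hin
  linarith

theorem sq_norm_sub_le_four {E : Type*} [SeminormedAddCommGroup E] {x y : E}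
    (hx : ‖x‖ = 1) (hy : ‖y‖ = 1) : ‖x - y‖ ^ 2 ≤ 4 := by
  have h : ‖x - y‖ ≤ 2 := (norm_sub_le x y).trans (by rw [hx, hy]; norm_num)
  nlinarith [norm_nonneg (x - y)]

theorem sq_norm_sub_le_two_mul_of_triangle {ι E : Type*} [SeminormedAddCommGroup E] {u : ι → E}
    (htri : ∀ i j k, ‖u i - u j‖ ^ 2 + ‖u j - u k‖ ^ 2 ≥ ‖u i - u k‖ ^ 2) {i j k : ι} {δ : ℝ}
    (hj : ‖u i - u j‖ ^ 2 ≤ δ) (hk : ‖u i - u k‖ ^ 2 ≤ δ) : ‖u j - u k‖ ^ 2 ≤ 2 * δ := by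
  have h := htri j i k
  rw [norm_sub_rev (u j)] at h
  linarith

theorem ball_card_bound_general {n : ℕ} (u : Fin n → EuclideanSpace ℝ (Fin n))
    (hunit : ∀ i, ‖u i‖ = 1)
    (htri : ∀ i j k : Fin n, ‖u i - u j‖ ^ 2 + ‖u j - u k‖ ^ 2 ≥ ‖u i - u k‖ ^ 2)
    (hbal : ∑ i, ∑ j, ‖u i - u j‖ ^ 2 = 2 * (n : ℝ) ^ 2) (i : Fin n) :
    ((Finset.univ.filter (fun j => ‖u i - u j‖ ^ 2 ≤ 1 / 8)).card : ℝ) ≤ 14 * n / 15 := by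
  set S := Finset.univ.filter (fun j => ‖u i - u j‖ ^ 2 ≤ 1 / 8)
  have hS : ∀ j ∈ S, ∀ k ∈ S, ‖u j - u k‖ ^ 2 ≤ 1 / 4 := fun j hj k hk => by
    rw [mem_filter] at hj hk
    linarith [sq_norm_sub_le_two_mul_of_triangle htri hj.2 hk.2]
  have hsum := Finset.sum_sum_le_of_le_on_sq (fun j k => ‖u j - u k‖ ^ 2) S hS
    fun j k => sq_norm_sub_le_four (hunit j) (hunit k)
  rw [hbal, Fintype.card_fin] at hsum
  have hm : (0 : ℝ) ≤ #S := Nat.cast_nonneg _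
  have hn : (0 : ℝ) ≤ n := Nat.cast_nonneg _
  nlinarith

theorem ball_card_bound {n : ℕ} (hn : 0 < n) (u : Fin n → EuclideanSpace ℝ (Fin n))
    (hunit : ∀ i, ‖u i‖ = 1)
    (htri : ∀ i j k : Fin n, ‖u i - u j‖ ^ 2 + ‖u j - u k‖ ^ 2 ≥ ‖u i - u k‖ ^ 2)
    (hbal : ∑ i, ∑ j, ‖u i - u j‖ ^ 2 = 2 * (n : ℝ) ^ 2) (i : Fin n) :
    ((Finset.univ.filter (fun j => ‖u i - u j‖ ^ 2 ≤ 1 / 8)).card : ℝ) ≤ 14 * n / 15 :=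
  ball_card_bound_general u hunit htri hbal i
end

section
/- Let L(Y) be the Laplacian of a weighted graph with weight Y_{ij} + Y_{ji} ≥ 0 on edge {i,j}. Suppose for every i ∈ S\T and t ∈ T there is a collection of paths in G[S] of length at most l carrying a total flow of at least c'l/n from i to t, where the total flow through any directed edge (i,j) over all paths is at most Y_{ij}. Then for all X ∈ ℝⁿ: Xᵀ L(Y)|_S X ≥ (c'/n) ∑_{i∈S\T, t∈T} (X_i - X_t)². -/
/-!
Telescoping along a path `i = v₀, …, v_k = t` with `k ≤ l` and Cauchy–Schwarz give
`(X i - X t)² ≤ l · ∑ⱼ (X vⱼ - X vⱼ₊₁)²`. Weighting this by the flow on each path and summing,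
the flow lower bound `c' l / n` turns the left side into `(c'/n) ∑ (X i - X t)²`, while the right
side regroups edge by edge into `∑ (flow through (a, b)) · (X a - X b)²`. The capacity constraints
bound this by `∑ Y a b (X a - X b)²`, which symmetrizes to the Laplacian form.
-/

/-- The number of traversals of the directed edge `(a, b)` by the walk `γ`
(given as its list of vertices). -/
def dirEdgeCount {α : Type*} [DecidableEq α] (γ : List α) (a b : α) : ℕ :=
  (γ.zip γ.tail).count (a, b)

open Finset

namespace List

theorem sq_sum_le_length_mul_sum_sq {R : Type*} [Semiring R] [LinearOrder R]
    [IsStrictOrderedRing R] [ExistsAddOfLE R] (L : List R) :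
    L.sum ^ 2 ≤ L.length * (L.map (· ^ 2)).sum := by
  have h := sq_sum_le_card_mul_sum_sq (s := univ) (f := fun i : Fin L.length => L[i.1])
  rwa [Fin.sum_univ_getElem, Fin.sum_univ_fun_getElem L (· ^ 2), card_univ, Fintype.card_fin] at h

variable {α : Type*}

theorem sum_map_zip_tail_sub {G : Type*} [AddCommGroup G] (X : α → G) :
    ∀ {γ : List α} {i t : α}, γ.head? = some i → γ.getLast? = some t →
      ((γ.zip γ.tail).map fun p => X p.1 - X p.2).sum = X i - X t
  | [], _, _, hi, _ => by simp at hi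
  | [a], _, _, hi, ht => by simp_all
  | a :: b :: γ, i, t, hi, ht => by
    obtain rfl : a = i := by simpa using hi
    rw [getLast?_cons_cons] at ht
    have ih := sum_map_zip_tail_sub X (γ := b :: γ) rfl ht
    simp only [tail_cons, zip_cons_cons, map_cons, sum_cons] at ih ⊢
    rw [ih, sub_add_sub_cancel]

theorem rel_of_mem_zip_tail {R : α → α → Prop} :
    ∀ {γ : List α}, γ.IsChain R → ∀ {a b : α}, (a, b) ∈ γ.zip γ.tail → R a b
  | [], _, _, _, h => by simp at h
  | [_], _, _, _, h => by simp at h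
  | _ :: _ :: _, hγ, _, _, h => by
    rw [isChain_cons_cons] at hγ
    rw [tail_cons, zip_cons_cons, mem_cons] at h
    rcases h with h | h
    · obtain ⟨rfl, rfl⟩ := Prod.mk.inj h
      exact hγ.1
    · exact rel_of_mem_zip_tail hγ.2 h

end List

section Walks

variable {α : Type*}

def walkEnergy (X : α → ℝ) (γ : List α) : ℝ :=
  ((γ.zip γ.tail).map fun p => (X p.1 - X p.2) ^ 2).sum

theorem walkEnergy_nonneg (X : α → ℝ) (γ : List α) : 0 ≤ walkEnergy X γ :=
  List.sum_nonneg fun x hx => by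
    obtain ⟨p, -, rfl⟩ := List.mem_map.1 hx
    positivity

theorem sq_sub_le_mul_walkEnergy (X : α → ℝ) {γ : List α} {i t : α} {l : ℕ}
    (hi : γ.head? = some i) (ht : γ.getLast? = some t) (hlen : γ.length ≤ l + 1) :
    (X i - X t) ^ 2 ≤ l * walkEnergy X γ := by
  set d := (γ.zip γ.tail).map fun p => X p.1 - X p.2
  have hd : d.length ≤ l := by
    simp only [d, List.length_map, List.length_zip, List.length_tail]
    omega
  have henergy : (d.map (· ^ 2)).sum = walkEnergy X γ := by
    rw [List.map_map]
    rfl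
  calc (X i - X t) ^ 2 = d.sum ^ 2 := by rw [List.sum_map_zip_tail_sub X hi ht]
    _ ≤ (d.length : ℝ) * (d.map (· ^ 2)).sum := List.sq_sum_le_length_mul_sum_sq d
    _ ≤ l * walkEnergy X γ := by
        rw [henergy]
        exact mul_le_mul_of_nonneg_right (by exact_mod_cast hd) (walkEnergy_nonneg X γ)

theorem mul_sq_le_sum_mul_walkEnergy (X : α → ℝ) {P : Finset (List α)} {w : List α → ℝ}
    (hw : ∀ γ ∈ P, 0 ≤ w γ) {i t : α} {l : ℕ} (hl : 0 < l) {c : ℝ}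
    (hP : ∀ γ ∈ P, γ.head? = some i ∧ γ.getLast? = some t ∧ γ.length ≤ l + 1)
    (hflow : c * l ≤ ∑ γ ∈ P, w γ) :
    c * (X i - X t) ^ 2 ≤ ∑ γ ∈ P, w γ * walkEnergy X γ := by
  refine le_of_mul_le_mul_left ?_ (Nat.cast_pos.2 hl : (0 : ℝ) < l)
  calc (l : ℝ) * (c * (X i - X t) ^ 2) = c * l * (X i - X t) ^ 2 := by ring
    _ ≤ ∑ γ ∈ P, w γ * (X i - X t) ^ 2 := by rw [← sum_mul]; gcongr
    _ ≤ ∑ γ ∈ P, w γ * (l * walkEnergy X γ) := by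
        gcongr with γ hγ
        · exact hw γ hγ
        · obtain ⟨hi, ht, hlen⟩ := hP γ hγ
          exact sq_sub_le_mul_walkEnergy X hi ht hlen
    _ = l * ∑ γ ∈ P, w γ * walkEnergy X γ := by
        rw [mul_sum]; exact sum_congr rfl fun γ _ => by ring

variable [DecidableEq α]

theorem sum_map_zip_tail_eq_sum_dirEdgeCount_smul {M : Type*} [AddCommMonoid M]
    (g : α → α → M) {S : Finset α} {γ : List α} (hS : ∀ v ∈ γ, v ∈ S) :
    ((γ.zip γ.tail).map fun p => g p.1 p.2).sum =
      ∑ a ∈ S, ∑ b ∈ S, dirEdgeCount γ a b • g a b := by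
  have hsub : (γ.zip γ.tail).toFinset ⊆ S ×ˢ S := fun p hp => by
    have hp' := List.of_mem_zip (List.mem_toFinset.1 hp)
    exact mem_product.2 ⟨hS _ hp'.1, hS _ (List.mem_of_mem_tail hp'.2)⟩
  rw [Finset.sum_list_map_count, ← sum_product' S S fun a b => dirEdgeCount γ a b • g a b]
  -- `sum_list_map_count` counts pairs with `instBEqOfDecidableEq`, whereas `dirEdgeCount`
  -- uses the componentwise `instBEqProd`; the two agree since both are lawful.
  refine (Finset.sum_subset hsub fun p _ hp => ?_).trans (Finset.sum_congr rfl fun p _ => ?_)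
  · rw [(@List.count_eq_zero _ instBEqOfDecidableEq _ _ _).2 (List.mem_toFinset.not.1 hp),
      zero_smul]
  · unfold dirEdgeCount
    congr!

theorem dirEdgeCount_eq_zero_of_not_rel {R : α → α → Prop} {γ : List α} (hγ : γ.IsChain R)
    {a b : α} (hab : ¬ R a b) : dirEdgeCount γ a b = 0 :=
  List.count_eq_zero.2 fun h => hab (List.rel_of_mem_zip_tail hγ h)

theorem walkEnergy_eq_sum_dirEdgeCount_mul (X : α → ℝ) {S : Finset α} {γ : List α}
    (hS : ∀ v ∈ γ, v ∈ S) :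
    walkEnergy X γ = ∑ a ∈ S, ∑ b ∈ S, (dirEdgeCount γ a b : ℝ) * (X a - X b) ^ 2 := by
  simp only [walkEnergy, sum_map_zip_tail_eq_sum_dirEdgeCount_smul (fun a b => (X a - X b) ^ 2) hS,
    nsmul_eq_mul]

end Walks

section Flows

variable {α : Type*} [DecidableEq α]

def edgeFlow (A B : Finset α) (D : α → α → Finset (List α)) (f : α → α → List α → ℝ)
    (a b : α) : ℝ :=
  ∑ i ∈ A, ∑ t ∈ B, ∑ γ ∈ D i t, (dirEdgeCount γ a b : ℝ) * f i t γ

theorem sum_mul_walkEnergy_eq_sum_edgeFlow_mul (X : α → ℝ) {A B S : Finset α}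
    {D : α → α → Finset (List α)} {f : α → α → List α → ℝ}
    (hS : ∀ i ∈ A, ∀ t ∈ B, ∀ γ ∈ D i t, ∀ v ∈ γ, v ∈ S) :
    ∑ i ∈ A, ∑ t ∈ B, ∑ γ ∈ D i t, f i t γ * walkEnergy X γ =
      ∑ a ∈ S, ∑ b ∈ S, edgeFlow A B D f a b * (X a - X b) ^ 2 := by
  calc _ = ∑ i ∈ A, ∑ t ∈ B, ∑ γ ∈ D i t, ∑ a ∈ S, ∑ b ∈ S,
        (dirEdgeCount γ a b : ℝ) * f i t γ * (X a - X b) ^ 2 := by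
        refine sum_congr rfl fun i hi => sum_congr rfl fun t ht => sum_congr rfl fun γ hγ => ?_
        rw [walkEnergy_eq_sum_dirEdgeCount_mul X (hS i hi t ht γ hγ), mul_sum]
        refine sum_congr rfl fun a _ => ?_
        rw [mul_sum]
        exact sum_congr rfl fun b _ => by ring
    _ = _ := by
        simp_rw [sum_comm (s := D _ _) (t := S), sum_comm (s := B) (t := S),
          sum_comm (s := A) (t := S), edgeFlow, sum_mul]

theorem edgeFlow_eq_zero_of_not_rel {R : α → α → Prop} {A B : Finset α}
    {D : α → α → Finset (List α)} (f : α → α → List α → ℝ)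
    (hR : ∀ i ∈ A, ∀ t ∈ B, ∀ γ ∈ D i t, γ.IsChain R) {a b : α} (hab : ¬ R a b) :
    edgeFlow A B D f a b = 0 :=
  sum_eq_zero fun i hi => sum_eq_zero fun t ht => sum_eq_zero fun γ hγ => by
    rw [dirEdgeCount_eq_zero_of_not_rel (hR i hi t ht γ hγ) hab, Nat.cast_zero, zero_mul]

end Flows

theorem SimpleGraph.sum_ite_adj_mul_eq_half_sum_ite_adj_add {V : Type*} (G : SimpleGraph V)
    [DecidableRel G.Adj] (S : Finset V) (Y q : V → V → ℝ) (hq : ∀ a b, q a b = q b a) :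
    ∑ a ∈ S, ∑ b ∈ S, (if G.Adj a b then Y a b * q a b else 0) =
      1 / 2 * ∑ a ∈ S, ∑ b ∈ S, (if G.Adj a b then (Y a b + Y b a) * q a b else 0) := by
  have hswap : ∑ a ∈ S, ∑ b ∈ S, (if G.Adj a b then Y b a * q a b else 0) =
      ∑ a ∈ S, ∑ b ∈ S, (if G.Adj a b then Y a b * q a b else 0) := by
    rw [sum_comm]
    simp_rw [G.adj_comm, hq]
  simp_rw [add_mul, ite_add_zero, sum_add_distrib, hswap]
  ring

theorem flow_routing_suffices_general {n : ℕ}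
    (G : SimpleGraph (Fin n)) [DecidableRel G.Adj]
    (S T : Finset (Fin n))
    (Y : Fin n → Fin n → ℝ)
    (l : ℕ) (hl : 0 < l) (c' : ℝ)
    -- the collection of flow paths from `i` to `t`, and the flow carried by each path
    (D : Fin n → Fin n → Finset (List (Fin n)))
    (f : Fin n → Fin n → List (Fin n) → ℝ)
    (hf0 : ∀ i t γ, γ ∈ D i t → 0 ≤ f i t γ)
    -- each path goes from `i` to `t`, has length at most `l`, stays in `S`,
    -- and follows edges of `G`
    (hpath : ∀ i ∈ S \ T, ∀ t ∈ T, ∀ γ ∈ D i t,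
      γ.head? = some i ∧ γ.getLast? = some t ∧ γ.length ≤ l + 1 ∧
        (∀ v ∈ γ, v ∈ S) ∧ List.Chain' G.Adj γ)
    -- each pair `(i, t)` receives a total flow of at least `c' l / n`
    (hflow : ∀ i ∈ S \ T, ∀ t ∈ T, c' * l / (n : ℝ) ≤ ∑ γ ∈ D i t, f i t γ)
    -- the total flow through any directed edge `(a, b)` is at most the capacity `Y a b`
    (hcap : ∀ a b : Fin n,
      (∑ i ∈ S \ T, ∑ t ∈ T, ∑ γ ∈ D i t, (dirEdgeCount γ a b : ℝ) * f i t γ) ≤ Y a b)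
    (X : Fin n → ℝ) :
    (c' / (n : ℝ)) * ∑ i ∈ S \ T, ∑ t ∈ T, (X i - X t) ^ 2 ≤
      (1 / 2) * ∑ a ∈ S, ∑ b ∈ S,
        (if G.Adj a b then (Y a b + Y b a) * (X a - X b) ^ 2 else 0) := by
  rw [← G.sum_ite_adj_mul_eq_half_sum_ite_adj_add S Y (fun a b => (X a - X b) ^ 2)
    fun a b => by ring]
  calc c' / n * ∑ i ∈ S \ T, ∑ t ∈ T, (X i - X t) ^ 2
      ≤ ∑ i ∈ S \ T, ∑ t ∈ T, ∑ γ ∈ D i t, f i t γ * walkEnergy X γ := by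
        simp only [mul_sum]
        gcongr with i hi t ht
        refine mul_sq_le_sum_mul_walkEnergy X (hf0 i t) hl (fun γ hγ => ?_) ?_
        · obtain ⟨hhead, hlast, hlen, -⟩ := hpath i hi t ht γ hγ
          exact ⟨hhead, hlast, hlen⟩
        · rw [div_mul_eq_mul_div]; exact hflow i hi t ht
    _ = ∑ a ∈ S, ∑ b ∈ S, edgeFlow (S \ T) T D f a b * (X a - X b) ^ 2 :=
        sum_mul_walkEnergy_eq_sum_edgeFlow_mul X fun i hi t ht γ hγ =>
          (hpath i hi t ht γ hγ).2.2.2.1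
    _ ≤ ∑ a ∈ S, ∑ b ∈ S, if G.Adj a b then Y a b * (X a - X b) ^ 2 else 0 := by
        gcongr with a _ b _
        split_ifs with hab
        · gcongr
          exact hcap a b
        · rw [edgeFlow_eq_zero_of_not_rel f (fun i hi t ht γ hγ => (hpath i hi t ht γ hγ).2.2.2.2)
            hab, zero_mul]

theorem flow_routing_suffices {n : ℕ} (hn : 0 < n)
    (G : SimpleGraph (Fin n)) [DecidableRel G.Adj]
    (S T : Finset (Fin n)) (hTS : T ⊆ S)
    (Y : Fin n → Fin n → ℝ) (hY : ∀ a b, 0 ≤ Y a b)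
    (l : ℕ) (hl : 0 < l) (c' : ℝ) (hc' : 0 ≤ c')
    -- the collection of flow paths from `i` to `t`, and the flow carried by each path
    (D : Fin n → Fin n → Finset (List (Fin n)))
    (f : Fin n → Fin n → List (Fin n) → ℝ)
    (hf0 : ∀ i t γ, γ ∈ D i t → 0 ≤ f i t γ)
    -- each path goes from `i` to `t`, has length at most `l`, stays in `S`,
    -- and follows edges of `G`
    (hpath : ∀ i ∈ S \ T, ∀ t ∈ T, ∀ γ ∈ D i t,
      γ.head? = some i ∧ γ.getLast? = some t ∧ γ.length ≤ l + 1 ∧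
        (∀ v ∈ γ, v ∈ S) ∧ List.Chain' G.Adj γ)
    -- each pair `(i, t)` receives a total flow of at least `c' l / n`
    (hflow : ∀ i ∈ S \ T, ∀ t ∈ T, c' * l / (n : ℝ) ≤ ∑ γ ∈ D i t, f i t γ)
    -- the total flow through any directed edge `(a, b)` is at most the capacity `Y a b`
    (hcap : ∀ a b : Fin n,
      (∑ i ∈ S \ T, ∑ t ∈ T, ∑ γ ∈ D i t, (dirEdgeCount γ a b : ℝ) * f i t γ) ≤ Y a b)
    (X : Fin n → ℝ) :
    (c' / (n : ℝ)) * ∑ i ∈ S \ T, ∑ t ∈ T, (X i - X t) ^ 2 ≤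
      (1 / 2) * ∑ a ∈ S, ∑ b ∈ S,
        (if G.Adj a b then (Y a b + Y b a) * (X a - X b) ^ 2 else 0) :=
  flow_routing_suffices_general G S T Y l hl c' D f hf0 hpath hflow hcap X
end
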